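/- QMAM approximate-to-exact gap: let ρ* ∈ D(A⊗X⊗Y), σ* ∈ D(X), c ∈ [0,1], 0 < Δ ≤ 1, and suppose the SDP optimum α = max{⟨R,ρ⟩ : tr_Y(ρ) ≤ (1/2)I_A ⊗ σ, ρ ∈ D(A⊗X⊗Y), σ ∈ D(X)} satisfies α ≤ c − Δ/2. Then for every (ρ,σ) the quantity max{c − ⟨R,ρ⟩, 0} + (1/2)‖tr_Y(ρ) − (1/2)I_A ⊗ σ‖₁ is at least Δ²/8. -/

import Mathlib

open Matrix Kronecker ComplexOrder
noncomputable section

/-- Hilbert–Schmidt inner product (real part): `⟨A,B⟩ = Re tr(Aᴴ B)`. -/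
def ip {n : Type*} [Fintype n] (A B : Matrix n n ℂ) : ℝ := ((Aᴴ * B).trace).re

/-- density operator -/
def IsDensity {n : Type*} [Fintype n] [DecidableEq n] (ρ : Matrix n n ℂ) : Prop :=
  ρ.PosSemidef ∧ ρ.trace = 1

/-- the former `Matrix.PosSemidef.sqrt` (removed from Mathlib), with its old definition -/
def psdSqrt {n : Type*} [Fintype n] [DecidableEq n] {A : Matrix n n ℂ} (hA : A.PosSemidef) :
    Matrix n n ℂ :=
  (hA.1.eigenvectorUnitary : Matrix n n ℂ) * diagonal ((↑) ∘ Real.sqrt ∘ hA.1.eigenvalues) *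
    (star hA.1.eigenvectorUnitary : Matrix n n ℂ)

/-- trace norm `‖A‖₁ = tr √(AᴴA)` -/
def traceNorm {n : Type*} [Fintype n] [DecidableEq n] (A : Matrix n n ℂ) : ℝ :=
  (psdSqrt (Matrix.posSemidef_conjTranspose_mul_self A)).trace.re

open Classical in
/-- square root of a positive semidefinite matrix (junk value `0` otherwise) -/
def msqrt {n : Type*} [Fintype n] [DecidableEq n] (A : Matrix n n ℂ) : Matrix n n ℂ :=
  if h : A.PosSemidef then psdSqrt h else 0

/-- fidelity `F(P,Q) = ‖√P √Q‖₁` -/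
def fidelity {n : Type*} [Fintype n] [DecidableEq n] (P Q : Matrix n n ℂ) : ℝ :=
  traceNorm (msqrt P * msqrt Q)

/-- partial trace over the second tensor factor -/
def ptraceRight {n m : Type*} [Fintype m] (M : Matrix (n × m) (n × m) ℂ) :
    Matrix n n ℂ := Matrix.of fun i j => ∑ k, M (i, k) (j, k)

/-- partial trace over the first tensor factor -/
def ptraceLeft {n m : Type*} [Fintype n] (M : Matrix (n × m) (n × m) ℂ) :
    Matrix m m ℂ := Matrix.of fun i j => ∑ k, M (k, i) (k, j)

/-- `0 ≤ Π ≤ I` -/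
def Meas {n : Type*} [Fintype n] [DecidableEq n] (P : Matrix n n ℂ) : Prop :=
  P.PosSemidef ∧ (1 - P).PosSemidef

/-!
Write `M = tr_Y ρ - ½ I_A ⊗ σ = M⁺ - M⁻`. Since `M` is traceless, `‖M‖₁ = 2a` with `a = tr M⁺`,
so only the case `a < Δ²/8` needs work. There the pair `(ρ, σ)` is repaired into an exactly
feasible one: because `M⁺ ≤ 2 I_A ⊗ tr_A M⁺`, the state `σ' ∝ σ + 4 tr_A M⁺` makes
`S = ½ I_A ⊗ σ' - r tr_Y ρ` positive for `r = 1 / (1 + 4a)`, and `ρ' = r ρ + S ⊗ tr_{AX} ρ`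
is a density with `tr_Y ρ' = ½ I_A ⊗ σ'` and `ρ' ≥ r ρ`. Hence
`⟨R, ρ⟩ ≤ ⟨R, ρ'⟩ + 4a ≤ c - Δ/2 + 4a`, and `Δ/2 - 3a ≥ Δ²/8` because `Δ ≤ 1`.
-/

open scoped MatrixOrder

section TraceNorm
variable {n : Type*} [Fintype n] [DecidableEq n]

lemma psdSqrt_eq_cfcSqrt {A : Matrix n n ℂ} (hA : A.PosSemidef) :
    psdSqrt hA = CFC.sqrt A := by
  rw [CFC.sqrt_eq_real_sqrt A hA.nonneg, cfcₙ_eq_cfc (hf0 := Real.sqrt_zero), hA.1.cfc_eq,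
    IsHermitian.cfc, Unitary.conjStarAlgAut_apply]
  rfl

lemma traceNorm_eq_re_trace_abs (M : Matrix n n ℂ) :
    traceNorm M = (CFC.abs M).trace.re := by
  rw [traceNorm, psdSqrt_eq_cfcSqrt, CFC.abs, star_eq_conjTranspose]

lemma traceNorm_eq_two_mul_re_trace_posPart {M : Matrix n n ℂ} (hM : M.IsHermitian)
    (htr : M.trace = 0) : traceNorm M = 2 * (M⁺).trace.re := by
  have h := congrArg (fun X => X.trace.re) (CFC.abs_add_self M hM)
  simp only [two_smul, trace_add, htr, add_zero, Complex.add_re] at h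
  rw [traceNorm_eq_re_trace_abs, h, two_mul]

end TraceNorm

section PartialTrace
variable {n m : Type*}

lemma ptraceLeft_eq_sum_submatrix [Fintype n] (M : Matrix (n × m) (n × m) ℂ) :
    ptraceLeft M = ∑ i, M.submatrix (i, ·) (i, ·) := by
  ext; simp [ptraceLeft, Matrix.sum_apply]

lemma ptraceRight_eq_sum_submatrix [Fintype m] (M : Matrix (n × m) (n × m) ℂ) :
    ptraceRight M = ∑ k, M.submatrix (·, k) (·, k) := by
  ext; simp [ptraceRight, Matrix.sum_apply]

lemma trace_ptraceLeft [Fintype n] [Fintype m] (M : Matrix (n × m) (n × m) ℂ) :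
    (ptraceLeft M).trace = M.trace := by
  simp [ptraceLeft, trace, Fintype.sum_prod_type, Finset.sum_comm (γ := m)]

lemma trace_ptraceRight [Fintype n] [Fintype m] (M : Matrix (n × m) (n × m) ℂ) :
    (ptraceRight M).trace = M.trace := by
  simp [ptraceRight, trace, Fintype.sum_prod_type]

lemma ptraceRight_add [Fintype m] (A B : Matrix (n × m) (n × m) ℂ) :
    ptraceRight (A + B) = ptraceRight A + ptraceRight B := by
  ext; simp [ptraceRight, Finset.sum_add_distrib]

lemma ptraceRight_smul [Fintype m] (r : ℝ) (A : Matrix (n × m) (n × m) ℂ) :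
    ptraceRight (r • A) = r • ptraceRight A := by
  ext; simp [ptraceRight, Finset.smul_sum]

lemma ptraceRight_kronecker [Fintype m] (A : Matrix n n ℂ) (B : Matrix m m ℂ) :
    ptraceRight (A ⊗ₖ B) = B.trace • A := by
  ext; simp [ptraceRight, trace, Finset.mul_sum, mul_comm]

lemma isHermitian_ptraceRight [Fintype m] {M : Matrix (n × m) (n × m) ℂ} (hM : M.IsHermitian) :
    (ptraceRight M).IsHermitian := by
  rw [ptraceRight_eq_sum_submatrix]
  exact isSelfAdjoint_sum _ fun k _ => hM.submatrix _

lemma posSemidef_ptraceLeft [Fintype n] {M : Matrix (n × m) (n × m) ℂ} (hM : M.PosSemidef) :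
    (ptraceLeft M).PosSemidef := by
  rw [ptraceLeft_eq_sum_submatrix]
  exact posSemidef_sum _ fun i _ => hM.submatrix _

end PartialTrace

lemma dotProduct_mulVec_sum_le_card_mul {ι n : Type*} [Fintype ι] [Fintype n]
    {P : Matrix n n ℂ} (hP : P.PosSemidef) (w : ι → n → ℂ) :
    star (∑ i, w i) ⬝ᵥ P *ᵥ ∑ i, w i ≤ Fintype.card ι * ∑ i, star (w i) ⬝ᵥ P *ᵥ w i := by
  have key : Fintype.card ι * ∑ i, star (w i) ⬝ᵥ P *ᵥ w i - star (∑ i, w i) ⬝ᵥ P *ᵥ ∑ i, w i =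
      2⁻¹ * ∑ i, ∑ j, star (w i - w j) ⬝ᵥ P *ᵥ (w i - w j) := by
    simp only [star_sub, star_sum, sub_dotProduct, dotProduct_sub, mulVec_sub, mulVec_sum,
      sum_dotProduct, dotProduct_sum, Finset.sum_sub_distrib, Finset.sum_const, Finset.card_univ,
      nsmul_eq_mul]
    rw [Finset.sum_comm (f := fun i j => star (w j) ⬝ᵥ P *ᵥ w i), ← Finset.mul_sum]
    ring
  rw [← sub_nonneg, key]
  exact mul_nonneg (by rw [Complex.nonneg_iff]; norm_num)
    (Finset.sum_nonneg fun i _ => Finset.sum_nonneg fun j _ => hP.dotProduct_mulVec_nonneg _)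

lemma le_card_smul_one_kronecker_ptraceLeft {n m : Type*} [Fintype n] [DecidableEq n]
    [Fintype m] {P : Matrix (n × m) (n × m) ℂ} (hP : P.PosSemidef) :
    P ≤ (Fintype.card n : ℂ) • ((1 : Matrix n n ℂ) ⊗ₖ ptraceLeft P) := by
  rw [Matrix.le_iff]
  refine PosSemidef.of_dotProduct_mulVec_nonneg ?_ fun v => ?_
  · exact (PosSemidef.smul (PosSemidef.one.kronecker (posSemidef_ptraceLeft hP))
      (Nat.cast_nonneg' _)).1.sub hP.1
  set q : (n × m → ℂ) → ℂ := fun w => star w ⬝ᵥ P *ᵥ w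
  set y : n → n → n × m → ℂ := fun a b p => if p.1 = b then v (a, p.2) else 0
  have hv : v = ∑ a, y a a := by
    ext ⟨a, x⟩; simp [y, Finset.sum_apply]
  have hquad : star v ⬝ᵥ ((1 : Matrix n n ℂ) ⊗ₖ ptraceLeft P) *ᵥ v = ∑ a, ∑ b, q (y a b) := by
    simp only [q, y, dotProduct, mulVec, kroneckerMap_apply, one_apply, ptraceLeft, of_apply,
      Fintype.sum_prod_type, Pi.star_apply, apply_ite (star : ℂ → ℂ), star_zero, mul_ite, ite_mul,
      mul_zero, zero_mul, one_mul, Finset.sum_ite_irrel, Finset.sum_const_zero,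
      Finset.sum_ite_eq', Finset.sum_ite_eq, Finset.mem_univ, if_true, Finset.mul_sum,
      Finset.sum_mul]
    refine Finset.sum_congr rfl fun a _ => ?_
    calc _ = ∑ x, ∑ b, ∑ x', star (v (a, x)) * (P (b, x) (b, x') * v (a, x')) :=
          Finset.sum_congr rfl fun _ _ => Finset.sum_comm
      _ = _ := Finset.sum_comm
  have hdiag : ∑ a, q (y a a) ≤ ∑ a, ∑ b, q (y a b) :=
    Finset.sum_le_sum fun a _ => Finset.single_le_sum (f := fun b => q (y a b))
      (fun b _ => hP.dotProduct_mulVec_nonneg _) (Finset.mem_univ a)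
  rw [sub_mulVec, smul_mulVec, dotProduct_sub, dotProduct_smul, hquad, smul_eq_mul, sub_nonneg]
  calc q v = q (∑ a, y a a) := by rw [← hv]
    _ ≤ Fintype.card n * ∑ a, q (y a a) := dotProduct_mulVec_sum_le_card_mul hP _
    _ ≤ Fintype.card n * ∑ a, ∑ b, q (y a b) := by gcongr

section InnerProduct
variable {n : Type*} [Fintype n]

lemma ip_sub (R A B : Matrix n n ℂ) : ip R (A - B) = ip R A - ip R B := by
  simp [ip, Matrix.mul_sub]

lemma ip_smul (R : Matrix n n ℂ) (r : ℝ) (A : Matrix n n ℂ) : ip R (r • A) = r * ip R A := by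
  simp [ip]

lemma ip_nonneg [DecidableEq n] {R A : Matrix n n ℂ} (hR : R.PosSemidef) (hA : A.PosSemidef) :
    0 ≤ ip R A := by
  set B := CFC.sqrt A
  have hB : Bᴴ = B := (CFC.sqrt_nonneg A).isSelfAdjoint
  have hBB : B * B = A := CFC.sqrt_mul_sqrt_self A hA.nonneg
  have htr : (Rᴴ * A).trace = (B * R * Bᴴ).trace := by
    rw [hR.1.eq, hB, ← hBB, ← Matrix.mul_assoc, trace_mul_comm, Matrix.mul_assoc]
  rw [ip, htr]
  exact (Complex.nonneg_iff.mp (hR.mul_mul_conjTranspose_same B).trace_nonneg).1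

lemma ip_mono [DecidableEq n] {R A B : Matrix n n ℂ} (hR : R.PosSemidef) (hAB : A ≤ B) :
    ip R A ≤ ip R B :=
  sub_nonneg.mp (ip_sub R B A ▸ ip_nonneg hR hAB)

lemma ip_le_one [DecidableEq n] {R ρ : Matrix n n ℂ} (hR : Meas R) (hρ : IsDensity ρ) :
    ip R ρ ≤ 1 := by
  have h := ip_nonneg hR.2 hρ.1
  simp only [ip, conjTranspose_sub, conjTranspose_one, Matrix.sub_mul, Matrix.one_mul,
    trace_sub, hρ.2, Complex.sub_re, Complex.one_re, sub_nonneg] at h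
  exact h

lemma ip_le_add_of_inv_smul_le [DecidableEq n] {R ρ ρ' : Matrix n n ℂ}
    {t : ℝ} (hR : Meas R) (hρ : IsDensity ρ) (ht : 0 ≤ t) (h : (1 + t)⁻¹ • ρ ≤ ρ') :
    ip R ρ ≤ ip R ρ' + t := by
  have hmono := ip_mono hR.1 h
  rw [ip_smul, inv_mul_le_iff₀ (by positivity)] at hmono
  nlinarith [ip_le_one hR hρ, ip_nonneg hR.1 hρ.1]

end InnerProduct

theorem exists_feasible_inv_smul_le {n m k : Type*} [Fintype n] [DecidableEq n] [Nonempty n]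
    [Fintype m] [DecidableEq m] [Fintype k] [DecidableEq k]
    {ρ : Matrix ((n × m) × k) ((n × m) × k) ℂ} {σ : Matrix m m ℂ}
    {P N : Matrix (n × m) (n × m) ℂ} {a : ℝ} (hρ : IsDensity ρ) (hσ : IsDensity σ)
    (hP : P.PosSemidef) (hN : N.PosSemidef) (hPtr : P.trace = a)
    (hPN : ptraceRight ρ - (Fintype.card n : ℂ)⁻¹ • ((1 : Matrix n n ℂ) ⊗ₖ σ) = P - N) :
    ∃ ρ' σ', IsDensity ρ' ∧ IsDensity σ' ∧
      ((Fintype.card n : ℂ)⁻¹ • ((1 : Matrix n n ℂ) ⊗ₖ σ') - ptraceRight ρ').PosSemidef ∧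
      (1 + Fintype.card n ^ 2 * a)⁻¹ • ρ ≤ ρ' := by
  set d : ℕ := Fintype.card n
  have hd : (d : ℂ) ≠ 0 := Nat.cast_ne_zero.mpr Fintype.card_ne_zero
  have ha : 0 ≤ a := Complex.zero_le_real.mp (hPtr ▸ hP.trace_nonneg)
  set r : ℝ := (1 + d ^ 2 * a)⁻¹
  have hr0 : 0 ≤ r := by positivity
  have hr : r * (1 + d ^ 2 * a) = 1 := inv_mul_cancel₀ (by positivity)
  set Q := ptraceLeft P
  set σ' := r • (σ + ((d ^ 2 : ℝ) : ℂ) • Q)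
  set S := (d : ℂ)⁻¹ • ((1 : Matrix n n ℂ) ⊗ₖ σ') - r • ptraceRight ρ
  have hS : S = r • (N + ((d : ℂ) • ((1 : Matrix n n ℂ) ⊗ₖ Q) - P)) := by
    simp only [S, σ', sub_eq_iff_eq_add'.mp hPN, kronecker_smul, kronecker_add]
    have hdd : (d : ℂ)⁻¹ * ((d ^ 2 : ℝ) : ℂ) = d := by push_cast; field_simp
    linear_combination (norm := module) hdd • (r • (1 : Matrix n n ℂ) ⊗ₖ Q)
  have hSpsd : S.PosSemidef := hS ▸ (hN.add (le_card_smul_one_kronecker_ptraceLeft hP)).smul hr0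
  have hQtr : Q.trace = a := by rw [trace_ptraceLeft, hPtr]
  have hσ'tr : σ'.trace = 1 := by
    simp only [σ', trace_smul, trace_add, hσ.2, hQtr]
    rw [Complex.real_smul, smul_eq_mul]
    exact_mod_cast hr
  have hStr : S.trace = 1 - r := by
    simp only [S, trace_sub, trace_smul, trace_kronecker, trace_one, hσ'tr, trace_ptraceRight,
      hρ.2]
    have hdd : (d : ℂ)⁻¹ * Fintype.card n = 1 := inv_mul_cancel₀ hd
    rw [mul_one, smul_eq_mul, hdd, Complex.real_smul, mul_one]
  have hη : (ptraceLeft ρ).trace = 1 := by rw [trace_ptraceLeft, hρ.2]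
  refine ⟨r • ρ + S ⊗ₖ ptraceLeft ρ, σ', ⟨?_, ?_⟩, ⟨?_, hσ'tr⟩, ?_, ?_⟩
  · exact (hρ.1.smul hr0).add (hSpsd.kronecker (posSemidef_ptraceLeft hρ.1))
  · rw [trace_add, trace_smul, trace_kronecker, hη, hρ.2, hStr]
    simp [Complex.real_smul]
  · exact (hσ.1.add ((posSemidef_ptraceLeft hP).smul (by positivity))).smul hr0
  · rw [ptraceRight_add, ptraceRight_smul, ptraceRight_kronecker, hη, one_smul]
    simpa [S] using PosSemidef.zero
  · rw [Matrix.le_iff, add_sub_cancel_left]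
    exact hSpsd.kronecker (posSemidef_ptraceLeft hρ.1)

theorem stmt18_general {xd yd : ℕ}
    (R : Matrix ((Fin 2 × Fin xd) × Fin yd) ((Fin 2 × Fin xd) × Fin yd) ℂ)
    (hR : Meas R) (c Δ : ℝ)
    (hΔ0 : 0 < Δ) (hΔ1 : Δ ≤ 1)
    (hopt : ∀ (ρ : Matrix ((Fin 2 × Fin xd) × Fin yd) ((Fin 2 × Fin xd) × Fin yd) ℂ)
        (σ : Matrix (Fin xd) (Fin xd) ℂ), IsDensity ρ → IsDensity σ →
        ((1 / 2 : ℂ) • ((1 : Matrix (Fin 2) (Fin 2) ℂ) ⊗ₖ σ) - ptraceRight ρ).PosSemidef →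
        ip R ρ ≤ c - Δ / 2) :
    ∀ (ρ : Matrix ((Fin 2 × Fin xd) × Fin yd) ((Fin 2 × Fin xd) × Fin yd) ℂ)
      (σ : Matrix (Fin xd) (Fin xd) ℂ), IsDensity ρ → IsDensity σ →
      Δ ^ 2 / 8 ≤ max (c - ip R ρ) 0 +
        traceNorm (ptraceRight ρ - (1 / 2 : ℂ) • ((1 : Matrix (Fin 2) (Fin 2) ℂ) ⊗ₖ σ)) / 2 := by
  intro ρ σ hρ hσ
  have hhalf : (1 / 2 : ℂ) = (Fintype.card (Fin 2) : ℂ)⁻¹ := by norm_num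
  set M := ptraceRight ρ - (1 / 2 : ℂ) • ((1 : Matrix (Fin 2) (Fin 2) ℂ) ⊗ₖ σ)
  have hM : M.IsHermitian := (isHermitian_ptraceRight hρ.1.1).sub
    (PosSemidef.one.kronecker hσ.1 |>.smul (by rw [Complex.nonneg_iff]; norm_num)).1
  have hMtr : M.trace = 0 := by
    simp [M, trace_ptraceRight, trace_kronecker, hρ.2, hσ.2]
  set a := (M⁺).trace.re
  rw [traceNorm_eq_two_mul_re_trace_posPart hM hMtr]
  rcases le_or_gt (Δ ^ 2 / 8) a with ha | ha
  · linarith [le_max_right (c - ip R ρ) 0]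
  have htr := Complex.nonneg_iff.mp (CFC.posPart_nonneg M).posSemidef.trace_nonneg
  obtain ⟨ρ', σ', hρ', hσ', hfeas, hle⟩ := exists_feasible_inv_smul_le hρ hσ
    (CFC.posPart_nonneg M).posSemidef (CFC.negPart_nonneg M).posSemidef
    (Complex.ext rfl (by simpa using htr.2.symm))
    (hhalf ▸ (CFC.posPart_sub_negPart M hM).symm)
  have hopt' := hopt ρ' σ' hρ' hσ' (hhalf ▸ hfeas)
  have hgap := ip_le_add_of_inv_smul_le hR hρ (mul_nonneg (by positivity) htr.1) hle
  simp only [Fintype.card_fin, Nat.cast_ofNat] at hgap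
  nlinarith [le_max_left (c - ip R ρ) 0, mul_le_mul_of_nonneg_left hΔ1 hΔ0.le]

/-- QMAM approximate-to-exact gap: if the QMAM SDP optimum is at most `c - Δ/2`,
then for every `(ρ, σ)` the approximate-feasibility functional is at least `Δ²/8`. -/
theorem stmt18 {xd yd : ℕ}
    (R : Matrix ((Fin 2 × Fin xd) × Fin yd) ((Fin 2 × Fin xd) × Fin yd) ℂ)
    (hR : Meas R) (c Δ : ℝ) (hc0 : 0 ≤ c) (hc1 : c ≤ 1)
    (hΔ0 : 0 < Δ) (hΔ1 : Δ ≤ 1)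
    (hopt : ∀ (ρ : Matrix ((Fin 2 × Fin xd) × Fin yd) ((Fin 2 × Fin xd) × Fin yd) ℂ)
        (σ : Matrix (Fin xd) (Fin xd) ℂ), IsDensity ρ → IsDensity σ →
        ((1 / 2 : ℂ) • ((1 : Matrix (Fin 2) (Fin 2) ℂ) ⊗ₖ σ) - ptraceRight ρ).PosSemidef →
        ip R ρ ≤ c - Δ / 2) :
    ∀ (ρ : Matrix ((Fin 2 × Fin xd) × Fin yd) ((Fin 2 × Fin xd) × Fin yd) ℂ)
      (σ : Matrix (Fin xd) (Fin xd) ℂ), IsDensity ρ → IsDensity σ →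
      Δ ^ 2 / 8 ≤ max (c - ip R ρ) 0 +
        traceNorm (ptraceRight ρ - (1 / 2 : ℂ) • ((1 : Matrix (Fin 2) (Fin 2) ℂ) ⊗ₖ σ)) / 2 :=
  stmt18_general R hR c Δ hΔ0 hΔ1 hopt
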